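/- Let N ∈ ℕ and let x, y ∈ ℝᴺ. Mapping each coordinate to a coherent state and taking the tensor-product feature map, the resulting kernel is the multidimensional RBF kernel: ∏_{i=1}^N ( ∑_{n=0}^∞ c_n(x_i) c_n(y_i) ) = exp(-‖x - y‖²/2), where c_n(t) = exp(-t²/2) · tⁿ/√(n!) and ‖·‖ is the Euclidean norm on ℝᴺ. -/

import Mathlib

/-- The `n`-th number-basis coefficient of the coherent state with real amplitude `t`:
`c_n(t) = exp(-t²/2) · tⁿ/√(n!)`. -/
noncomputable def realCoherentCoeff (t : ℝ) (n : ℕ) : ℝ :=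
  Real.exp (-(t ^ 2) / 2) * t ^ n / Real.sqrt n.factorial

open Real

theorem realCoherentCoeff_mul_realCoherentCoeff (s t : ℝ) (n : ℕ) :
    realCoherentCoeff s n * realCoherentCoeff t n =
      exp (-(s ^ 2 + t ^ 2) / 2) * ((s * t) ^ n / n.factorial) := by
  have hfac : √(n.factorial : ℝ) * √(n.factorial : ℝ) = n.factorial :=
    mul_self_sqrt (Nat.cast_nonneg _)
  rw [realCoherentCoeff, realCoherentCoeff, div_mul_div_comm, hfac, neg_add, add_div,
    exp_add]
  ring

theorem tsum_realCoherentCoeff_mul_realCoherentCoeff (s t : ℝ) :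
    ∑' n : ℕ, realCoherentCoeff s n * realCoherentCoeff t n = exp (-(s - t) ^ 2 / 2) := by
  have hexp : ∑' n : ℕ, (s * t) ^ n / (n.factorial : ℝ) = exp (s * t) := by
    rw [exp_eq_exp_ℝ, NormedSpace.exp_eq_tsum_div]
  simp_rw [realCoherentCoeff_mul_realCoherentCoeff]
  rw [tsum_mul_left, hexp, ← exp_add]
  ring_nf

theorem EuclideanSpace.prod_exp_neg_sq_sub_div_two {ι : Type*} [Fintype ι]
    (x y : EuclideanSpace ℝ ι) :
    ∏ i, exp (-(x i - y i) ^ 2 / 2) = exp (-‖x - y‖ ^ 2 / 2) := by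
  rw [← exp_sum, EuclideanSpace.real_norm_sq_eq, neg_div, Finset.sum_div,
    ← Finset.sum_neg_distrib]
  simp only [neg_div, PiLp.sub_apply]

/-- mapping each coordinate of `x ∈ ℝᴺ` to a coherent state and taking the
tensor-product feature map yields the multidimensional RBF kernel:
`∏ᵢ (∑ₙ c_n(xᵢ) c_n(yᵢ)) = exp(-‖x - y‖²/2)`. -/
theorem coherentState_tensor_kernel_eq_rbf (N : ℕ) (x y : EuclideanSpace ℝ (Fin N)) :
    ∏ i : Fin N, (∑' n : ℕ, realCoherentCoeff (x i) n * realCoherentCoeff (y i) n) =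
      Real.exp (-‖x - y‖ ^ 2 / 2) := by
  simp_rw [tsum_realCoherentCoeff_mul_realCoherentCoeff]
  exact EuclideanSpace.prod_exp_neg_sq_sub_div_two x y
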